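/- Claim (measure of the pulled-back neighborhood under a quasi-isometry): Let Φ : Γ → Γ̂ be a quasi-isometry with constants ε, a, b, C_q between connected weighted graphs with controlled and uniformly lazy weights. Then there is a constant c₃ > 0, depending only on ε and the quasi-isometry and weight constants, such that for every finite set Ω̂ ⊆ Γ̂, the set Ω = {α ∈ Γ : d̂(Φ(α), Ω̂) ≤ ε} satisfies π(Ω) ≤ c₃ · π̂(Ω̂). -/

import Mathlib

open scoped BigOperators

/-- Sum of a real-valued function over a set of vertices. -/
noncomputable def setSum {V : Type*} (A : Set V) (f : V → ℝ) : ℝ := ∑' y : A, f (y : V)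

open Classical in
/-- The Markov kernel attached to vertex weights `pw` and edge weights `ew`. -/
noncomputable def mkernel {V : Type*} (pw : V → ℝ) (ew : V → V → ℝ) (x y : V) : ℝ :=
  if x = y then 1 - (∑' z, ew x z) / pw x else ew x y / pw x

open Classical in
/-- Iterates (convolution powers) of the Markov kernel. -/
noncomputable def mkernelPow {V : Type*} (pw : V → ℝ) (ew : V → V → ℝ) : ℕ → V → V → ℝ
  | 0 => fun x y => if x = y then 1 else 0
  | n + 1 => fun x y => ∑' z, mkernel pw ew x z * mkernelPow pw ew n z y

/-- The heat kernel (transition density) of the random walk. -/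
noncomputable def mheat {V : Type*} (pw : V → ℝ) (ew : V → V → ℝ) (n : ℕ) (x y : V) : ℝ :=
  mkernelPow pw ew n x y / pw y

/-- A weighted graph: a simple connected graph with symmetric, adapted edge weights
subordinate to positive vertex weights. -/
structure WeightedGraph (V : Type*) where
  G : SimpleGraph V
  wV : V → ℝ
  wE : V → V → ℝ
  wV_pos : ∀ x, 0 < wV x
  wE_nonneg : ∀ x y, 0 ≤ wE x y
  wE_symm : ∀ x y, wE x y = wE y x
  adapted : ∀ x y, 0 < wE x y ↔ G.Adj x y
  connected : G.Connected
  wE_summable : ∀ x, Summable fun y => wE x y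
  subordinate : ∀ x, (∑' y, wE x y) ≤ wV x

namespace WeightedGraph

variable {V : Type*}

/-- Controlled weights with constant `Cc`. -/
def Controlled (Γ : WeightedGraph V) (Cc : ℝ) : Prop :=
  1 < Cc ∧ ∀ x y, Γ.G.Adj x y → Γ.wV x ≤ Cc * Γ.wE x y

/-- Uniformly lazy weights with constant `Ce`. -/
def UniformlyLazy (Γ : WeightedGraph V) (Ce : ℝ) : Prop :=
  Ce ∈ Set.Ioo (0 : ℝ) 1 ∧ ∀ x, (∑' y, Γ.wE x y) ≤ (1 - Ce) * Γ.wV x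

/-- Closed ball for the graph distance. -/
noncomputable def ball (Γ : WeightedGraph V) (x : V) (r : ℝ) : Set V :=
  {y | (Γ.G.dist x y : ℝ) ≤ r}

/-- Volume of a ball. -/
noncomputable def vol (Γ : WeightedGraph V) (x : V) (r : ℝ) : ℝ :=
  setSum (Γ.ball x r) Γ.wV

/-- Dirichlet energy of a function. -/
noncomputable def energy (Γ : WeightedGraph V) (f : V → ℝ) : ℝ :=
  (∑' x, ∑' y, (f x - f y) ^ 2 * Γ.wE x y) / 2

/-- Squared `L²`-norm of a function. -/
noncomputable def sqnorm (Γ : WeightedGraph V) (f : V → ℝ) : ℝ :=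
  ∑' x, f x ^ 2 * Γ.wV x

/-- The first Dirichlet eigenvalue of a finite set `Ω`. -/
noncomputable def lambda1 (Γ : WeightedGraph V) (Ω : Finset V) : ℝ :=
  sInf {q | ∃ f : V → ℝ, f ≠ 0 ∧ (∀ x, f x ≠ 0 → x ∈ Ω) ∧ q = Γ.energy f / Γ.sqnorm f}

/-- `Λ` is a relative Faber-Krahn function of `Γ`: for balls `B(z,r)` the map
`ν ↦ Λ z r ν` is non-increasing, and `λ₁(Ω) ≥ Λ(B, π(Ω))` for nonempty finite `Ω ⊆ B`. -/
def IsRelFK (Γ : WeightedGraph V) (Λ : V → ℝ → ℝ → ℝ) : Prop :=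
  (∀ z r ν₁ ν₂, 0 < ν₁ → ν₁ ≤ ν₂ → Λ z r ν₂ ≤ Λ z r ν₁) ∧
  ∀ z : V, ∀ r : ℝ, ∀ Ω : Finset V, Ω.Nonempty → (∀ x ∈ Ω, x ∈ Γ.ball z r) →
    Λ z r (∑ x ∈ Ω, Γ.wV x) ≤ Γ.lambda1 Ω

/-- The heat kernel of the weighted graph. -/
noncomputable def heatKernel (Γ : WeightedGraph V) : ℕ → V → V → ℝ :=
  mheat Γ.wV Γ.wE

/-- `ε`-average of a function over closed balls of radius `ε`. -/
noncomputable def avg (Γ : WeightedGraph V) (ε : ℝ) (f : V → ℝ) (x : V) : ℝ :=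
  setSum (Γ.ball x ε) (fun y => f y * Γ.wV y) / Γ.vol x ε

/-- `Φ` is a quasi-isometry between weighted graphs with constants `ε, a, b, Cq`. -/
structure IsQI {V₁ V₂ : Type*} (Γ₁ : WeightedGraph V₁) (Γ₂ : WeightedGraph V₂)
    (Φ : V₁ → V₂) (ε a b Cq : ℝ) : Prop where
  eps_pos : 0 < ε
  a_pos : 0 < a
  b_nonneg : 0 ≤ b
  Cq_pos : 0 < Cq
  dense : ∀ z : V₂, ∃ x : V₁, (Γ₂.G.dist (Φ x) z : ℝ) ≤ ε
  dist_lower : ∀ x y : V₁, a⁻¹ * (Γ₁.G.dist x y : ℝ) - b ≤ (Γ₂.G.dist (Φ x) (Φ y) : ℝ)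
  dist_upper : ∀ x y : V₁, (Γ₂.G.dist (Φ x) (Φ y) : ℝ) ≤ a * (Γ₁.G.dist x y : ℝ)
  weight_lower : ∀ x, Cq⁻¹ * Γ₁.wV x ≤ Γ₂.wV (Φ x)
  weight_upper : ∀ x, Γ₂.wV (Φ x) ≤ Cq * Γ₁.wV x

end WeightedGraph

/-!
Controlled weights give every edge at least a `1 / Cc` share of the weight of its endpoint, so
degrees are at most `Cc`, balls of radius `n` have at most `(Cc + 1) ^ n` vertices, and `π`
changes by at most a factor `Cc` along an edge. For `y ∈ Γ₂`, the lower quasi-isometry bound puts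
all `x` with `d₂(Φ x, y) ≤ ε` into one `Γ₁`-ball of radius `a (2ε + b)`, so there are boundedly
many of them, each with `π₁(x) ≤ Cq π₂(Φ x) ≤ Cq Cc₂ ^ ⌈ε⌉ π₂(y)`. Summing over `y ∈ Ω̂` gives
the bound.
-/

theorem Finset.sum_biUnion_le_sum_sum {ι α M : Type*} [DecidableEq α] [AddCommMonoid M]
    [PartialOrder M] [IsOrderedAddMonoid M] (s : Finset ι) (t : ι → Finset α) {f : α → M}
    (hf : ∀ x, 0 ≤ f x) : ∑ x ∈ s.biUnion t, f x ≤ ∑ i ∈ s, ∑ x ∈ t i, f x := by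
  classical
  induction s using Finset.induction_on with
  | empty => simp
  | insert i s hi ih =>
    rw [Finset.biUnion_insert, Finset.sum_insert hi]
    calc ∑ x ∈ t i ∪ s.biUnion t, f x
        ≤ ∑ x ∈ t i ∪ s.biUnion t, f x + ∑ x ∈ t i ∩ s.biUnion t, f x :=
          le_add_of_nonneg_right (Finset.sum_nonneg fun x _ => hf x)
      _ = ∑ x ∈ t i, f x + ∑ x ∈ s.biUnion t, f x := Finset.sum_union_inter
      _ ≤ ∑ x ∈ t i, f x + ∑ j ∈ s, ∑ x ∈ t j, f x := add_le_add_right ih _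

theorem SimpleGraph.Connected.eq_or_exists_adj_of_dist_le_succ {V : Type*} {G : SimpleGraph V}
    (hG : G.Connected) {x y : V} {n : ℕ} (h : G.dist x y ≤ n + 1) :
    y = x ∨ ∃ w, G.dist x w ≤ n ∧ G.Adj w y := by
  obtain ⟨p, hp⟩ := hG.exists_walk_length_eq_dist y x
  cases p with
  | nil => exact Or.inl rfl
  | @cons _ w _ hyw q =>
    refine Or.inr ⟨w, ?_, hyw.symm⟩
    rw [SimpleGraph.Walk.length_cons, SimpleGraph.dist_comm] at hp
    rw [SimpleGraph.dist_comm]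
    have := G.dist_le q
    omega

namespace WeightedGraph

variable {V : Type*} {Γ : WeightedGraph V} {Cc : ℝ}

theorem wE_le_wV (Γ : WeightedGraph V) (x y : V) : Γ.wE x y ≤ Γ.wV y :=
  calc Γ.wE x y = Γ.wE y x := Γ.wE_symm x y
    _ ≤ ∑' z, Γ.wE y z := (Γ.wE_summable y).le_tsum x fun z _ => Γ.wE_nonneg y z
    _ ≤ Γ.wV y := Γ.subordinate y

theorem mem_ball {x y : V} {r : ℝ} : y ∈ Γ.ball x r ↔ (Γ.G.dist x y : ℝ) ≤ r := Iff.rfl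

theorem dist_le_two_mul_of_mem_ball {x y z : V} {r : ℝ} (hx : x ∈ Γ.ball z r)
    (hy : y ∈ Γ.ball z r) : (Γ.G.dist x y : ℝ) ≤ 2 * r := by
  have htri : Γ.G.dist x y ≤ Γ.G.dist z x + Γ.G.dist z y := by
    rw [SimpleGraph.dist_comm (u := z)]
    exact Γ.connected.dist_triangle
  rw [mem_ball] at hx hy
  calc (Γ.G.dist x y : ℝ) ≤ Γ.G.dist z x + Γ.G.dist z y := by exact_mod_cast htri
    _ ≤ 2 * r := by linarith

theorem Controlled.pos (hc : Γ.Controlled Cc) : 0 < Cc := zero_lt_one.trans hc.1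

theorem Controlled.wV_le_pow_length_mul (hc : Γ.Controlled Cc) {u v : V} (p : Γ.G.Walk u v) :
    Γ.wV u ≤ Cc ^ p.length * Γ.wV v := by
  induction p with
  | nil => simp
  | @cons u w v huw q ih =>
    have := hc.pos
    calc Γ.wV u ≤ Cc * Γ.wE u w := hc.2 u w huw
      _ ≤ Cc * Γ.wV w := by gcongr; exact Γ.wE_le_wV u w
      _ ≤ Cc * (Cc ^ q.length * Γ.wV v) := by gcongr
      _ = Cc ^ (q.cons huw).length * Γ.wV v := by rw [SimpleGraph.Walk.length_cons]; ring

theorem Controlled.wV_le_pow_dist_mul (hc : Γ.Controlled Cc) (u v : V) :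
    Γ.wV u ≤ Cc ^ Γ.G.dist u v * Γ.wV v := by
  obtain ⟨p, hp⟩ := Γ.connected.exists_walk_length_eq_dist u v
  exact hp ▸ hc.wV_le_pow_length_mul p

theorem Controlled.card_le_of_subset_neighborSet (hc : Γ.Controlled Cc) {x : V} {s : Finset V}
    (hs : ↑s ⊆ Γ.G.neighborSet x) : (s.card : ℝ) ≤ Cc := by
  have hsum : ∑ y ∈ s, Γ.wE x y ≤ Γ.wV x :=
    ((Γ.wE_summable x).sum_le_tsum s fun y _ => Γ.wE_nonneg x y).trans (Γ.subordinate x)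
  refine le_of_mul_le_mul_right ?_ (Γ.wV_pos x)
  calc (s.card : ℝ) * Γ.wV x = ∑ _y ∈ s, Γ.wV x := by simp
    _ ≤ ∑ y ∈ s, Cc * Γ.wE x y := Finset.sum_le_sum fun y hy => hc.2 x y (hs hy)
    _ = Cc * ∑ y ∈ s, Γ.wE x y := (Finset.mul_sum _ _ _).symm
    _ ≤ Cc * Γ.wV x := by have := hc.pos; gcongr

theorem Controlled.finite_neighborSet (hc : Γ.Controlled Cc) (x : V) :
    (Γ.G.neighborSet x).Finite := by
  by_contra hinf
  obtain ⟨s, hs, hcard⟩ := Set.Infinite.exists_subset_card_eq hinf (⌈Cc⌉₊ + 1)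
  have := hc.card_le_of_subset_neighborSet hs
  rw [hcard, Nat.cast_add_one] at this
  linarith [Nat.le_ceil Cc]

theorem Controlled.exists_ball_subset_finset (hc : Γ.Controlled Cc) (x : V) (n : ℕ) :
    ∃ s : Finset V, Γ.ball x n ⊆ s ∧ (s.card : ℝ) ≤ (Cc + 1) ^ n := by
  classical
  induction n with
  | zero =>
    refine ⟨{x}, fun y hy => ?_, by simp⟩
    have hxy : Γ.G.dist x y = 0 := by simpa [mem_ball] using hy
    simp [Γ.connected.dist_eq_zero_iff.1 hxy]
  | succ n ih =>
    obtain ⟨s, hs, hcard⟩ := ih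
    let closedNbhd : V → Finset V := fun v => insert v (hc.finite_neighborSet v).toFinset
    refine ⟨s.biUnion closedNbhd, fun y hy => ?_, ?_⟩
    · have hxy : Γ.G.dist x y ≤ n + 1 := by exact_mod_cast mem_ball.1 hy
      rcases Γ.connected.eq_or_exists_adj_of_dist_le_succ hxy with rfl | ⟨w, hxw, hwy⟩
      · have hy : y ∈ s := hs (by simp [mem_ball])
        exact Finset.mem_biUnion.2 ⟨y, hy, Finset.mem_insert_self _ _⟩
      · have hw : w ∈ s := hs (mem_ball.2 (by exact_mod_cast hxw))
        exact Finset.mem_biUnion.2 ⟨w, hw, by simp [closedNbhd, hwy]⟩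
    · calc ((s.biUnion closedNbhd).card : ℝ) ≤ ∑ v ∈ s, ((closedNbhd v).card : ℝ) := by
            exact_mod_cast Finset.card_biUnion_le
        _ ≤ s.card • (Cc + 1) := Finset.sum_le_card_nsmul _ _ _ fun v _ => ?_
        _ ≤ (Cc + 1) ^ n * (Cc + 1) := by
            rw [nsmul_eq_mul]; gcongr; linarith [hc.pos]
        _ = (Cc + 1) ^ (n + 1) := (pow_succ _ _).symm
      calc ((closedNbhd v).card : ℝ) ≤ (hc.finite_neighborSet v).toFinset.card + 1 := by
            exact_mod_cast Finset.card_insert_le _ _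
        _ ≤ Cc + 1 := by
            gcongr
            exact hc.card_le_of_subset_neighborSet (x := v) (by simp)

namespace IsQI

variable {V₁ V₂ : Type*} {Γ₁ : WeightedGraph V₁} {Γ₂ : WeightedGraph V₂} {Φ : V₁ → V₂}
  {ε a b Cq : ℝ}

theorem dist_le_mul_dist_add (hΦ : IsQI Γ₁ Γ₂ Φ ε a b Cq) (x x' : V₁) :
    (Γ₁.G.dist x x' : ℝ) ≤ a * (Γ₂.G.dist (Φ x) (Φ x') + b) :=
  (inv_mul_le_iff₀ hΦ.a_pos).1 (by linarith [hΦ.dist_lower x x'])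

theorem wV_le_mul_wV (hΦ : IsQI Γ₁ Γ₂ Φ ε a b Cq) (x : V₁) : Γ₁.wV x ≤ Cq * Γ₂.wV (Φ x) :=
  (inv_mul_le_iff₀ hΦ.Cq_pos).1 (hΦ.weight_lower x)

theorem wV_le_of_mem_ball (hΦ : IsQI Γ₁ Γ₂ Φ ε a b Cq) {Cc₂ : ℝ} (h₂c : Γ₂.Controlled Cc₂)
    {x : V₁} {y : V₂} (hx : Φ x ∈ Γ₂.ball y ε) : Γ₁.wV x ≤ Cq * Cc₂ ^ ⌈ε⌉₊ * Γ₂.wV y := by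
  have hdist : Γ₂.G.dist (Φ x) y ≤ ⌈ε⌉₊ := by
    rw [SimpleGraph.dist_comm]
    exact_mod_cast (mem_ball.1 hx).trans (Nat.le_ceil ε)
  have := hΦ.Cq_pos
  calc Γ₁.wV x ≤ Cq * Γ₂.wV (Φ x) := hΦ.wV_le_mul_wV x
    _ ≤ Cq * (Cc₂ ^ Γ₂.G.dist (Φ x) y * Γ₂.wV y) := by gcongr; exact h₂c.wV_le_pow_dist_mul _ _
    _ ≤ Cq * (Cc₂ ^ ⌈ε⌉₊ * Γ₂.wV y) := by
        have := Γ₂.wV_pos y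
        gcongr
        exact h₂c.1.le
    _ = Cq * Cc₂ ^ ⌈ε⌉₊ * Γ₂.wV y := by ring

theorem exists_finset_eq_preimage_ball (hΦ : IsQI Γ₁ Γ₂ Φ ε a b Cq) {Cc₁ : ℝ}
    (h₁c : Γ₁.Controlled Cc₁) (y : V₂) :
    ∃ F : Finset V₁, ↑F = Φ ⁻¹' Γ₂.ball y ε ∧
      (F.card : ℝ) ≤ (Cc₁ + 1) ^ ⌈a * (2 * ε + b)⌉₊ := by
  classical
  rcases (Φ ⁻¹' Γ₂.ball y ε).eq_empty_or_nonempty with hempty | ⟨x₀, hx₀⟩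
  · exact ⟨∅, by simp [hempty], by simpa using pow_nonneg (by linarith [h₁c.pos]) _⟩
  obtain ⟨s, hs, hcard⟩ := h₁c.exists_ball_subset_finset x₀ ⌈a * (2 * ε + b)⌉₊
  refine ⟨s.filter (fun x => Φ x ∈ Γ₂.ball y ε), ?_,
    hcard.trans' (by exact_mod_cast Finset.card_filter_le _ _)⟩
  rw [Finset.coe_filter]
  refine Set.ext fun x => ⟨fun hx => hx.2, fun hx => ⟨hs (mem_ball.2 ?_), hx⟩⟩
  have := hΦ.a_pos
  calc (Γ₁.G.dist x₀ x : ℝ) ≤ a * (Γ₂.G.dist (Φ x₀) (Φ x) + b) := hΦ.dist_le_mul_dist_add x₀ x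
    _ ≤ a * (2 * ε + b) := by gcongr; exact dist_le_two_mul_of_mem_ball hx₀ hx
    _ ≤ ⌈a * (2 * ε + b)⌉₊ := Nat.le_ceil _

end IsQI

end WeightedGraph

open WeightedGraph in
theorem measure_of_pulled_back_neighborhood_general {V₁ V₂ : Type*}
    (Γ₁ : WeightedGraph V₁) (Γ₂ : WeightedGraph V₂)
    (Cc₁ Cc₂ : ℝ)
    (h₁c : Γ₁.Controlled Cc₁)
    (h₂c : Γ₂.Controlled Cc₂)
    (Φ : V₁ → V₂) (ε a b Cq : ℝ) (hΦ : IsQI Γ₁ Γ₂ Φ ε a b Cq) :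
    ∃ c₃ : ℝ, 0 < c₃ ∧ ∀ Ωhat : Finset V₂,
      setSum {x : V₁ | ∃ y ∈ Ωhat, (Γ₂.G.dist (Φ x) y : ℝ) ≤ ε} Γ₁.wV
        ≤ c₃ * ∑ y ∈ Ωhat, Γ₂.wV y := by
  classical
  choose F hF hFcard using hΦ.exists_finset_eq_preimage_ball h₁c
  set N := (Cc₁ + 1) ^ ⌈a * (2 * ε + b)⌉₊
  set K := Cq * Cc₂ ^ ⌈ε⌉₊
  have hK : 0 < K := mul_pos hΦ.Cq_pos (pow_pos h₂c.pos _)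
  refine ⟨N * K, mul_pos (pow_pos (by linarith [h₁c.pos]) _) hK, fun Ωhat => ?_⟩
  have hΩ : {x | ∃ y ∈ Ωhat, (Γ₂.G.dist (Φ x) y : ℝ) ≤ ε} = ↑(Ωhat.biUnion F) := by
    ext x
    simp only [Set.mem_ofPred_eq, Finset.coe_biUnion, Set.mem_iUnion, hF, Set.mem_preimage,
      mem_ball, SimpleGraph.dist_comm, exists_prop, Finset.mem_coe]
  have hfiber (y : V₂) : ∑ x ∈ F y, Γ₁.wV x ≤ N * K * Γ₂.wV y := by
    have := Γ₂.wV_pos y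
    calc ∑ x ∈ F y, Γ₁.wV x ≤ (F y).card • (K * Γ₂.wV y) :=
          Finset.sum_le_card_nsmul _ _ _ fun x hx =>
            hΦ.wV_le_of_mem_ball h₂c (by rw [← Set.mem_preimage, ← hF]; exact hx)
      _ ≤ N * (K * Γ₂.wV y) := by rw [nsmul_eq_mul]; gcongr; exact hFcard y
      _ = N * K * Γ₂.wV y := by ring
  rw [hΩ, setSum, Finset.tsum_subtype']
  calc ∑ x ∈ Ωhat.biUnion F, Γ₁.wV x ≤ ∑ y ∈ Ωhat, ∑ x ∈ F y, Γ₁.wV x :=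
        Finset.sum_biUnion_le_sum_sum _ _ fun x => (Γ₁.wV_pos x).le
    _ ≤ ∑ y ∈ Ωhat, N * K * Γ₂.wV y := Finset.sum_le_sum fun y _ => hfiber y
    _ = N * K * ∑ y ∈ Ωhat, Γ₂.wV y := (Finset.mul_sum _ _ _).symm

open WeightedGraph in
/-- **Claim (measure of the pulled-back neighborhood under a quasi-isometry).**
Let `Φ : Γ₁ → Γ₂` be a quasi-isometry between connected weighted graphs with controlled
and uniformly lazy weights.  Then there is a constant `c₃ > 0` such that for every
finite set `Ω̂ ⊆ Γ₂`, the set `Ω = {α | d₂(Φ α, Ω̂) ≤ ε}` satisfies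
`π₁(Ω) ≤ c₃ · π₂(Ω̂)`. -/
theorem measure_of_pulled_back_neighborhood {V₁ V₂ : Type*}
    (Γ₁ : WeightedGraph V₁) (Γ₂ : WeightedGraph V₂)
    (Cc₁ Ce₁ Cc₂ Ce₂ : ℝ)
    (h₁c : Γ₁.Controlled Cc₁) (h₁e : Γ₁.UniformlyLazy Ce₁)
    (h₂c : Γ₂.Controlled Cc₂) (h₂e : Γ₂.UniformlyLazy Ce₂)
    (Φ : V₁ → V₂) (ε a b Cq : ℝ) (hΦ : IsQI Γ₁ Γ₂ Φ ε a b Cq) :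
    ∃ c₃ : ℝ, 0 < c₃ ∧ ∀ Ωhat : Finset V₂,
      setSum {x : V₁ | ∃ y ∈ Ωhat, (Γ₂.G.dist (Φ x) y : ℝ) ≤ ε} Γ₁.wV
        ≤ c₃ * ∑ y ∈ Ωhat, Γ₂.wV y :=
  measure_of_pulled_back_neighborhood_general Γ₁ Γ₂ Cc₁ Cc₂ h₁c h₂c Φ ε a b Cq hΦ
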